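/- Let N ⊆ M_d(ℂ) be a unital *-subalgebra, E : M_d(ℂ) → N the trace-preserving conditional expectation onto N, and σ, ρ positive definite states on M_d(ℂ). Then ‖σ^{1/2} σ_N^{−1/2} Γ_N^{1/2} σ_N^{1/2} − Γ^{1/2} σ^{1/2}‖₂ ≥ (1/2) · ‖Γ‖∞^{−1/2} · ‖σ^{−1}‖∞^{−1/2} · ‖σ σ_N^{−1} ρ_N − ρ‖₂. -/

import Mathlib

/-!
Write `s = σ^{1/2}`, `g = Γ^{1/2}`, `t = σ_N^{1/2}`, `i = σ_N^{-1/2}`, `h = Γ_N^{1/2}`, so that the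
left-hand side is `‖Δ‖₂` with `Δ = s i h t - g s`. Since `ρ = s g² s`, `ρ_N = t h² t` and
`i t = t i = 1`, the difference factors as `σ σ_N⁻¹ ρ_N - ρ = s Δ (i h t) + (s g) Δ`, whence
`‖σ σ_N⁻¹ ρ_N - ρ‖₂ ≤ (‖s‖∞ ‖i h t‖∞ + ‖s g‖∞) ‖Δ‖₂`.

Bounding operator norms by Frobenius norms and using `tr σ = tr ρ = tr ρ_N = 1` gives `‖s‖∞ ≤ 1`,
`‖s g‖∞ ≤ 1` and `‖i h t‖∞² ≤ ‖σ_N⁻¹‖∞ ≤ ‖σ⁻¹‖∞`; the last step holds because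
`σ ≥ ‖σ⁻¹‖∞⁻¹ · 1` and `E` is positive and unital. Finally `‖Γ‖∞ ≥ tr (Γ σ) = 1` and
`‖σ⁻¹‖∞ ≥ 1`, so `‖σ⁻¹‖∞^{1/2} + 1 ≤ 2 ‖Γ‖∞^{1/2} ‖σ⁻¹‖∞^{1/2}`.
-/

open Matrix MeasureTheory Filter Topology Kronecker ComplexOrder

/-- Apply a real function to a matrix via the functional calculus for Hermitian
matrices (and return `0` on non-Hermitian input). -/
noncomputable def mfun {d : ℕ} (f : ℝ → ℝ) (A : Matrix (Fin d) (Fin d) ℂ) :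
    Matrix (Fin d) (Fin d) ℂ :=
  if hA : A.IsHermitian then hA.cfc f else 0

/-- Square root of a Hermitian positive semidefinite matrix. -/
noncomputable def msqrt {d : ℕ} (A : Matrix (Fin d) (Fin d) ℂ) : Matrix (Fin d) (Fin d) ℂ :=
  mfun Real.sqrt A

/-- Inverse square root of a Hermitian positive semidefinite matrix (Moore–Penrose
pseudoinverse of the square root in the singular case, since `(0 : ℝ)⁻¹ = 0`). -/
noncomputable def misqrt {d : ℕ} (A : Matrix (Fin d) (Fin d) ℂ) : Matrix (Fin d) (Fin d) ℂ :=
  mfun (fun x => (Real.sqrt x)⁻¹) A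

/-- Inverse of a Hermitian matrix (Moore–Penrose pseudoinverse in the singular case). -/
noncomputable def minv {d : ℕ} (A : Matrix (Fin d) (Fin d) ℂ) : Matrix (Fin d) (Fin d) ℂ :=
  mfun (fun x => x⁻¹) A

/-- Logarithm of a positive definite matrix. -/
noncomputable def mlog {d : ℕ} (A : Matrix (Fin d) (Fin d) ℂ) : Matrix (Fin d) (Fin d) ℂ :=
  mfun Real.log A

/-- Frobenius (Schatten-2) norm ‖A‖₂ = tr(AᴴA)^(1/2). -/
noncomputable def frob {n : Type*} [Fintype n] (A : Matrix n n ℂ) : ℝ :=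
  Real.sqrt (Matrix.trace (Aᴴ * A)).re

/-- Operator norm ‖A‖∞ of a matrix, acting on the Euclidean space ℂᵈ. -/
noncomputable def opNorm {n : Type*} [Fintype n] [DecidableEq n] (A : Matrix n n ℂ) : ℝ :=
  ‖LinearMap.toContinuousLinearMap (Matrix.toEuclideanLin A)‖

/-- The Belavkin–Staszewski relative entropy
`Ŝ_BS(σ‖ρ) = −tr[σ log(σ^{−1/2} ρ σ^{−1/2})]`. -/
noncomputable def BS {d : ℕ} (σ ρ : Matrix (Fin d) (Fin d) ℂ) : ℝ :=
  -(Matrix.trace (σ * mlog (misqrt σ * ρ * misqrt σ))).re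

/-- The maximal f-divergence `Ŝ_f(σ‖ρ) = tr[ρ^{1/2} f(ρ^{−1/2} σ ρ^{−1/2}) ρ^{1/2}]`. -/
noncomputable def hatS {d : ℕ} (f : ℝ → ℝ) (σ ρ : Matrix (Fin d) (Fin d) ℂ) : ℝ :=
  (Matrix.trace (msqrt ρ * mfun f (misqrt ρ * σ * misqrt ρ) * msqrt ρ)).re

/-- The Umegaki relative entropy `D(σ‖ρ) = tr[σ (log σ − log ρ)]`. -/
noncomputable def relEnt {d : ℕ} (σ ρ : Matrix (Fin d) (Fin d) ℂ) : ℝ :=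
  (Matrix.trace (σ * (mlog σ - mlog ρ))).re

/-- The Choi matrix of a linear map between matrix algebras. -/
noncomputable def choi {d₁ d₂ : ℕ} (T : Matrix (Fin d₁) (Fin d₁) ℂ →ₗ[ℂ] Matrix (Fin d₂) (Fin d₂) ℂ) :
    Matrix (Fin d₁ × Fin d₂) (Fin d₁ × Fin d₂) ℂ :=
  Matrix.of fun p q => T (Matrix.single p.1 q.1 1) p.2 q.2

/-- A quantum channel: a completely positive (equivalently, with positive semidefinite Choi
matrix) trace-preserving linear map. -/
def IsCPTP {d₁ d₂ : ℕ} (T : Matrix (Fin d₁) (Fin d₁) ℂ →ₗ[ℂ] Matrix (Fin d₂) (Fin d₂) ℂ) :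
    Prop :=
  (choi T).PosSemidef ∧ ∀ A, (T A).trace = A.trace

/-- Partial trace over the second tensor factor. -/
noncomputable def ptrace2 {d₂ s : ℕ} (M : Matrix (Fin d₂ × Fin s) (Fin d₂ × Fin s) ℂ) :
    Matrix (Fin d₂) (Fin d₂) ℂ :=
  Matrix.of fun i j => ∑ k : Fin s, M (i, k) (j, k)

/-- The Loewner order: `A ≤ B` iff `B - A` is positive semidefinite. -/
def Loewner {n : ℕ} (A B : Matrix (Fin n) (Fin n) ℂ) : Prop := (B - A).PosSemidef

/-- A function `f : (0,∞) → ℝ` is operator convex. -/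
def OperatorConvex (f : ℝ → ℝ) : Prop :=
  ∀ (n : ℕ) (A B : Matrix (Fin n) (Fin n) ℂ), A.PosDef → B.PosDef →
    ∀ t : ℝ, 0 ≤ t → t ≤ 1 →
      Loewner (mfun f ((t : ℂ) • A + ((1 - t : ℝ) : ℂ) • B))
        ((t : ℂ) • mfun f A + ((1 - t : ℝ) : ℂ) • mfun f B)

/-- A function `f : (0,∞) → ℝ` is operator monotone decreasing. -/
def OperatorAntitone (f : ℝ → ℝ) : Prop :=
  ∀ (n : ℕ) (A B : Matrix (Fin n) (Fin n) ℂ), A.PosDef → B.PosDef →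
    Loewner A B → Loewner (mfun f B) (mfun f A)

open scoped MatrixOrder

section FunctionalCalculus

variable {d : ℕ} {A : Matrix (Fin d) (Fin d) ℂ}

lemma mfun_eq_cfc (f : ℝ → ℝ) (A : Matrix (Fin d) (Fin d) ℂ) : mfun f A = cfc f A := by
  by_cases hA : A.IsHermitian
  · rw [mfun, dif_pos hA, hA.cfc_eq]
  · rw [mfun, dif_neg hA, cfc_apply_of_not_predicate]
    rwa [← Matrix.isHermitian_iff_isSelfAdjoint]

lemma isHermitian_mfun (f : ℝ → ℝ) (A : Matrix (Fin d) (Fin d) ℂ) : (mfun f A).IsHermitian :=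
  mfun_eq_cfc f A ▸ cfc_predicate f A

lemma isHermitian_msqrt (A : Matrix (Fin d) (Fin d) ℂ) : (msqrt A).IsHermitian :=
  isHermitian_mfun _ A

lemma isHermitian_misqrt (A : Matrix (Fin d) (Fin d) ℂ) : (misqrt A).IsHermitian :=
  isHermitian_mfun _ A

lemma isHermitian_minv (A : Matrix (Fin d) (Fin d) ℂ) : (minv A).IsHermitian :=
  isHermitian_mfun _ A

lemma mfun_mul_mfun (f g : ℝ → ℝ) (A : Matrix (Fin d) (Fin d) ℂ) :
    mfun f A * mfun g A = mfun (fun x => f x * g x) A := by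
  simp only [mfun_eq_cfc]
  exact (cfc_mul f g A (A.finite_real_spectrum.continuousOn _)
    (A.finite_real_spectrum.continuousOn _)).symm

lemma mfun_mul_mfun_eq_self {f g : ℝ → ℝ} (hA : IsSelfAdjoint A)
    (hfg : ∀ x ∈ spectrum ℝ A, f x * g x = x) : mfun f A * mfun g A = A := by
  rw [mfun_mul_mfun, mfun_eq_cfc, cfc_congr hfg, cfc_id' ℝ A hA]

lemma mfun_mul_mfun_eq_one {f g : ℝ → ℝ} (hA : IsSelfAdjoint A)
    (hfg : ∀ x ∈ spectrum ℝ A, f x * g x = 1) : mfun f A * mfun g A = 1 := by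
  rw [mfun_mul_mfun, mfun_eq_cfc, cfc_congr hfg, cfc_const_one ℝ A hA]

lemma msqrt_mul_msqrt (hA : 0 ≤ A) : msqrt A * msqrt A = A :=
  mfun_mul_mfun_eq_self hA.isSelfAdjoint fun _ hx =>
    Real.mul_self_sqrt (spectrum_nonneg_of_nonneg hA hx)

lemma msqrt_mul_misqrt (hA : IsStrictlyPositive A) : msqrt A * misqrt A = 1 :=
  mfun_mul_mfun_eq_one hA.isSelfAdjoint fun _ hx =>
    mul_inv_cancel₀ (Real.sqrt_ne_zero'.mpr (hA.spectrum_pos hx))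

lemma misqrt_mul_msqrt (hA : IsStrictlyPositive A) : misqrt A * msqrt A = 1 :=
  mfun_mul_mfun_eq_one hA.isSelfAdjoint fun _ hx =>
    inv_mul_cancel₀ (Real.sqrt_ne_zero'.mpr (hA.spectrum_pos hx))

lemma misqrt_mul_misqrt (hA : 0 ≤ A) : misqrt A * misqrt A = minv A := by
  rw [misqrt, mfun_mul_mfun, minv, mfun_eq_cfc, mfun_eq_cfc]
  refine cfc_congr fun _ hx => ?_
  rw [← mul_inv, Real.mul_self_sqrt (spectrum_nonneg_of_nonneg hA hx)]

lemma minv_eq_ringInverse (hA : IsStrictlyPositive A) : minv A = Ring.inverse A := by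
  rw [minv, mfun_eq_cfc,
    cfc_ringInverse_id (R := ℝ) (ha_unit := hA.isUnit) (ha := hA.isSelfAdjoint)]

end FunctionalCalculus

/-- `frob X` is the norm of `Xᴴ` for the inner product `⟪X, Y⟫ = tr (Y Xᴴ)` that Mathlib attaches
to the positive matrix `1`. -/
lemma frob_add_le {n : Type*} [Fintype n] (A B : Matrix n n ℂ) :
    frob (A + B) ≤ frob A + frob B := by
  classical
  let := Matrix.toMatrixSeminormedAddCommGroup (1 : Matrix n n ℂ) PosSemidef.one
  have key : ∀ X : Matrix n n ℂ, frob X = ‖Xᴴ‖ := fun X => by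
    change _ = Real.sqrt (RCLike.re (trace (Xᴴ * 1 * Xᴴᴴ)))
    rw [frob, mul_one, conjTranspose_conjTranspose]
    rfl
  simpa only [key, conjTranspose_add] using norm_add_le Aᴴ Bᴴ

-- From here on `‖·‖` on matrices is the operator norm; it would clash with the norm used above.
open scoped Matrix.Norms.L2Operator

section Norms

variable {n : Type*} [Fintype n]

lemma re_trace_nonneg {A : Matrix n n ℂ} (hA : 0 ≤ A) : 0 ≤ (trace A).re :=
  (Complex.le_def.mp hA.posSemidef.trace_nonneg).1

lemma re_trace_mono {A B : Matrix n n ℂ} (hAB : A ≤ B) : (trace A).re ≤ (trace B).re := by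
  have := re_trace_nonneg (sub_nonneg.mpr hAB)
  rwa [trace_sub, Complex.sub_re, sub_nonneg] at this

lemma nonempty_of_trace_ne_zero {A : Matrix n n ℂ} (hA : trace A ≠ 0) : Nonempty n := by
  by_contra h
  rw [not_nonempty_iff] at h
  exact hA (by simp [trace])

lemma frob_nonneg (A : Matrix n n ℂ) : 0 ≤ frob A := Real.sqrt_nonneg _

lemma frob_sq (A : Matrix n n ℂ) : frob A ^ 2 = (trace (Aᴴ * A)).re :=
  Real.sq_sqrt (re_trace_nonneg (posSemidef_conjTranspose_mul_self A).nonneg)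

lemma frob_conjTranspose (A : Matrix n n ℂ) : frob Aᴴ = frob A := by
  rw [frob, frob, conjTranspose_conjTranspose, trace_mul_comm]

variable [DecidableEq n]

lemma opNorm_eq_norm (A : Matrix n n ℂ) : opNorm A = ‖A‖ := rfl

lemma norm_le_re_trace {P : Matrix n n ℂ} (hP : 0 ≤ P) : ‖P‖ ≤ (trace P).re := by
  rcases isEmpty_or_nonempty n with hn | hn
  · simp [Subsingleton.elim P 0]
  have hPh := hP.posSemidef.isHermitian
  obtain ⟨i, hi⟩ : ∃ i, hPh.eigenvalues i = ‖P‖ := by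
    simpa [hPh.spectrum_real_eq_range_eigenvalues] using
      CStarAlgebra.norm_mem_spectrum_of_nonneg hP
  rw [hPh.trace_eq_sum_eigenvalues, ← hi, Complex.re_sum]
  simpa using
    Finset.single_le_sum (fun j _ => hP.posSemidef.eigenvalues_nonneg j) (Finset.mem_univ i)

lemma re_trace_mul_le {P Q : Matrix n n ℂ} (hP : IsSelfAdjoint P) (hQ : 0 ≤ Q) :
    (trace (P * Q)).re ≤ ‖P‖ * (trace Q).re := by
  set R := CFC.sqrt Q
  have hR : IsSelfAdjoint R := (CFC.sqrt_nonneg Q).isSelfAdjoint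
  have hRR : R * R = Q := CFC.sqrt_mul_sqrt_self Q hQ
  have hconj : R * P * R ≤ R * algebraMap ℝ _ ‖P‖ * R :=
    hR.conjugate_le_conjugate hP.le_algebraMap_norm_self
  calc (trace (P * Q)).re = (trace (R * P * R)).re := by
        rw [← hRR, ← mul_assoc, trace_mul_comm, mul_assoc]
    _ ≤ (trace (R * algebraMap ℝ _ ‖P‖ * R)).re := re_trace_mono hconj
    _ = ‖P‖ * (trace Q).re := by
        rw [Algebra.algebraMap_eq_smul_one, mul_smul_comm, mul_one, smul_mul_assoc, hRR,
          trace_smul, Complex.real_smul, Complex.re_ofReal_mul]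

lemma norm_le_frob (A : Matrix n n ℂ) : ‖A‖ ≤ frob A := by
  refine Real.le_sqrt_of_sq_le ?_
  rw [sq, ← l2_opNorm_conjTranspose_mul_self]
  exact norm_le_re_trace (posSemidef_conjTranspose_mul_self A).nonneg

lemma frob_mul_le_left (X M : Matrix n n ℂ) : frob (X * M) ≤ ‖X‖ * frob M := by
  refine le_of_sq_le_sq ?_ (mul_nonneg (norm_nonneg X) (frob_nonneg M))
  calc frob (X * M) ^ 2 = (trace ((Xᴴ * X) * (M * Mᴴ))).re := by
        rw [frob_sq, conjTranspose_mul, mul_assoc, trace_mul_comm]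
        simp only [mul_assoc]
    _ ≤ ‖Xᴴ * X‖ * (trace (M * Mᴴ)).re :=
        re_trace_mul_le (posSemidef_conjTranspose_mul_self X).nonneg.isSelfAdjoint
          (posSemidef_self_mul_conjTranspose M).nonneg
    _ = (‖X‖ * frob M) ^ 2 := by
        rw [l2_opNorm_conjTranspose_mul_self, mul_pow, frob_sq, trace_mul_comm, sq]

lemma frob_mul_le_right (M X : Matrix n n ℂ) : frob (M * X) ≤ frob M * ‖X‖ := by
  rw [← frob_conjTranspose, conjTranspose_mul, ← frob_conjTranspose M, mul_comm,
    ← l2_opNorm_conjTranspose X]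
  exact frob_mul_le_left _ _

end Norms

lemma ringInverse_algebraMap {𝕜 R : Type*} [Field 𝕜] [Ring R] [Algebra 𝕜 R] (r : 𝕜) :
    Ring.inverse (algebraMap 𝕜 R r) = algebraMap 𝕜 R r⁻¹ := by
  rcases eq_or_ne r 0 with rfl | hr
  · simp
  · have hu : IsUnit (algebraMap 𝕜 R r) := (isUnit_iff_ne_zero.mpr hr).map _
    rw [← mul_one (Ring.inverse _), Ring.inverse_mul_eq_iff_eq_mul _ _ _ hu, ← map_mul,
      mul_inv_cancel₀ hr, map_one]

section Inverse

variable {A : Type*} [CStarAlgebra A] [PartialOrder A] [StarOrderedRing A]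

lemma algebraMap_inv_norm_ringInverse_le {a : A} (ha : IsStrictlyPositive a) :
    algebraMap ℝ A ‖Ring.inverse a‖⁻¹ ≤ a := by
  have hinv := ha.ringInverse
  have h := CStarAlgebra.ringInverse_le_ringInverse hinv.isSelfAdjoint.le_algebraMap_norm_self hinv
  rwa [ringInverse_algebraMap, Ring.inverse_inverse ha.isUnit] at h

lemma norm_ringInverse_le_of_algebraMap_le {r : ℝ} (hr : 0 < r) {b : A}
    (hb : algebraMap ℝ A r ≤ b) : ‖Ring.inverse b‖ ≤ r⁻¹ := by
  have hpos : IsStrictlyPositive (algebraMap ℝ A r) := isStrictlyPositive_algebraMap hr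
  have h := CStarAlgebra.ringInverse_le_ringInverse hb hpos
  rw [ringInverse_algebraMap] at h
  exact (CStarAlgebra.norm_le_iff_le_algebraMap _ (inv_nonneg.mpr hr.le)
    (hpos.of_le hb).ringInverse.nonneg).mpr h

end Inverse

section PositiveMap

variable {d : ℕ} {E : Matrix (Fin d) (Fin d) ℂ →ₗ[ℂ] Matrix (Fin d) (Fin d) ℂ}
  {σ : Matrix (Fin d) (Fin d) ℂ}

lemma norm_minv_pos [Nonempty (Fin d)] (hσ : IsStrictlyPositive σ) : 0 < ‖minv σ‖ := by
  refine norm_pos_iff.mpr fun h => one_ne_zero (α := Matrix (Fin d) (Fin d) ℂ) ?_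
  rw [← Ring.inverse_mul_cancel σ hσ.isUnit, ← minv_eq_ringInverse hσ, h, zero_mul]

lemma map_le_map_of_posSemidef (hEpos : ∀ A, A.PosSemidef → (E A).PosSemidef)
    {A B : Matrix (Fin d) (Fin d) ℂ} (hAB : A ≤ B) : E A ≤ E B := by
  rw [Matrix.le_iff, ← map_sub]
  exact hEpos _ hAB

lemma algebraMap_le_map (hEpos : ∀ A, A.PosSemidef → (E A).PosSemidef) (hE1 : E 1 = 1)
    (hσ : IsStrictlyPositive σ) : algebraMap ℝ _ ‖minv σ‖⁻¹ ≤ E σ := by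
  have h := map_le_map_of_posSemidef hEpos (algebraMap_inv_norm_ringInverse_le hσ)
  rwa [Algebra.algebraMap_eq_smul_one, LinearMap.map_smul_of_tower, hE1,
    ← Algebra.algebraMap_eq_smul_one, ← minv_eq_ringInverse hσ] at h

lemma isStrictlyPositive_map [Nonempty (Fin d)] (hEpos : ∀ A, A.PosSemidef → (E A).PosSemidef)
    (hE1 : E 1 = 1) (hσ : IsStrictlyPositive σ) : IsStrictlyPositive (E σ) :=
  (isStrictlyPositive_algebraMap (inv_pos.mpr (norm_minv_pos hσ))).of_le
    (algebraMap_le_map hEpos hE1 hσ)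

lemma norm_minv_map_le [Nonempty (Fin d)] (hEpos : ∀ A, A.PosSemidef → (E A).PosSemidef)
    (hE1 : E 1 = 1) (hσ : IsStrictlyPositive σ) : ‖minv (E σ)‖ ≤ ‖minv σ‖ := by
  have h := norm_ringInverse_le_of_algebraMap_le (inv_pos.mpr (norm_minv_pos hσ))
    (algebraMap_le_map hEpos hE1 hσ)
  rwa [inv_inv, ← minv_eq_ringInverse (isStrictlyPositive_map hEpos hE1 hσ)] at h

end PositiveMap

section Conjugation

variable {d : ℕ} {τ ω : Matrix (Fin d) (Fin d) ℂ}

lemma one_le_norm_minv_mul_re_trace [Nonempty (Fin d)] (hτ : IsStrictlyPositive τ) :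
    1 ≤ ‖minv τ‖ * (trace τ).re :=
  calc (1 : ℝ) = ‖minv τ * τ‖ := by
        rw [minv_eq_ringInverse hτ, Ring.inverse_mul_cancel τ hτ.isUnit, CStarRing.norm_one]
    _ ≤ ‖minv τ‖ * ‖τ‖ := norm_mul_le _ _
    _ ≤ ‖minv τ‖ * (trace τ).re :=
        mul_le_mul_of_nonneg_left (norm_le_re_trace hτ.nonneg) (norm_nonneg _)

lemma conj_misqrt_nonneg (hω : 0 ≤ ω) : 0 ≤ misqrt τ * ω * misqrt τ :=
  (isHermitian_misqrt τ).isSelfAdjoint.conjugate_nonneg hω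

lemma msqrt_mul_conj_misqrt_mul_msqrt (hτ : IsStrictlyPositive τ) (ω : Matrix (Fin d) (Fin d) ℂ) :
    msqrt τ * (misqrt τ * ω * misqrt τ) * msqrt τ = ω := by
  simp only [← mul_assoc]
  rw [msqrt_mul_misqrt hτ, one_mul, mul_assoc, misqrt_mul_msqrt hτ, mul_one]

lemma trace_conj_misqrt_mul (hτ : IsStrictlyPositive τ) (ω : Matrix (Fin d) (Fin d) ℂ) :
    trace (misqrt τ * ω * misqrt τ * τ) = trace ω :=
  calc trace (misqrt τ * ω * misqrt τ * τ)
      = trace (misqrt τ * ω * misqrt τ * (msqrt τ * msqrt τ)) := by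
        rw [msqrt_mul_msqrt hτ.nonneg]
    _ = trace (msqrt τ * (misqrt τ * ω * misqrt τ) * msqrt τ) := by
        rw [← mul_assoc, trace_mul_comm, ← mul_assoc]
    _ = trace ω := by rw [msqrt_mul_conj_misqrt_mul_msqrt hτ]

lemma re_trace_le_norm_conj_misqrt_mul (hτ : IsStrictlyPositive τ) (hω : 0 ≤ ω) :
    (trace ω).re ≤ ‖misqrt τ * ω * misqrt τ‖ * (trace τ).re := by
  rw [← trace_conj_misqrt_mul hτ ω]
  exact re_trace_mul_le (conj_misqrt_nonneg hω).isSelfAdjoint hτ.nonneg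

lemma trace_msqrt_conj_mul_msqrt_conj (hτ : IsStrictlyPositive τ) (hω : 0 ≤ ω) :
    trace (msqrt (misqrt τ * ω * misqrt τ) * τ * msqrt (misqrt τ * ω * misqrt τ)) = trace ω := by
  rw [mul_assoc, trace_mul_comm, mul_assoc, msqrt_mul_msqrt (conj_misqrt_nonneg hω),
    trace_mul_comm, trace_conj_misqrt_mul hτ]

lemma norm_msqrt_le (hτ : 0 ≤ τ) : ‖msqrt τ‖ ≤ √(trace τ).re :=
  (norm_le_frob _).trans_eq <| by rw [frob, (isHermitian_msqrt τ).eq, msqrt_mul_msqrt hτ]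

lemma norm_msqrt_mul_msqrt_conj_le (hτ : IsStrictlyPositive τ) (hω : 0 ≤ ω) :
    ‖msqrt τ * msqrt (misqrt τ * ω * misqrt τ)‖ ≤ √(trace ω).re :=
  (norm_le_frob _).trans_eq <| by
    rw [frob, conjTranspose_mul, (isHermitian_msqrt τ).eq, (isHermitian_msqrt _).eq,
      mul_assoc, ← mul_assoc (msqrt τ), msqrt_mul_msqrt hτ.nonneg, ← mul_assoc,
      trace_msqrt_conj_mul_msqrt_conj hτ hω]

lemma norm_misqrt_mul_msqrt_conj_mul_msqrt_le (hτ : IsStrictlyPositive τ) (hω : 0 ≤ ω) :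
    ‖misqrt τ * msqrt (misqrt τ * ω * misqrt τ) * msqrt τ‖ ≤ √(‖minv τ‖ * (trace ω).re) := by
  set h := msqrt (misqrt τ * ω * misqrt τ)
  have hh : h.IsHermitian := isHermitian_msqrt _
  have hconj : 0 ≤ h * τ * h := hh.isSelfAdjoint.conjugate_nonneg hτ.nonneg
  refine (norm_le_frob _).trans (Real.sqrt_le_sqrt ?_)
  calc (trace ((misqrt τ * h * msqrt τ)ᴴ * (misqrt τ * h * msqrt τ))).re
      = (trace ((msqrt τ * h) * (minv τ * (h * msqrt τ)))).re := by
        rw [conjTranspose_mul, conjTranspose_mul, hh.eq, (isHermitian_msqrt τ).eq,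
          (isHermitian_misqrt τ).eq, ← misqrt_mul_misqrt hτ.nonneg]
        simp only [mul_assoc]
    _ = (trace (minv τ * (h * (msqrt τ * msqrt τ) * h))).re := by
        rw [trace_mul_comm]
        simp only [mul_assoc]
    _ = (trace (minv τ * (h * τ * h))).re := by rw [msqrt_mul_msqrt hτ.nonneg]
    _ ≤ ‖minv τ‖ * (trace (h * τ * h)).re :=
        re_trace_mul_le (isHermitian_minv τ).isSelfAdjoint hconj
    _ = ‖minv τ‖ * (trace ω).re := by rw [trace_msqrt_conj_mul_msqrt_conj hτ hω]

end Conjugation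

lemma sub_eq_mul_mul_add_mul_of_mul_eq_one {R : Type*} [Ring R] {σ σNinv ρN ρ s g i h t : R}
    (hit : i * t = 1) (hti : t * i = 1) (hσ : s * s = σ) (hσN : i * i = σNinv)
    (hρN : t * (h * h) * t = ρN) (hρ : s * (g * g) * s = ρ) :
    σ * σNinv * ρN - ρ
      = s * ((s * i * h * t - g * s) * (i * h * t)) + s * g * (s * i * h * t - g * s) := by
  subst hσ hσN hρN hρ
  have lhs : s * s * (i * i) * (t * (h * h) * t) = s * s * i * (i * t) * (h * h) * t := by
    noncomm_ring
  have rhs : s * ((s * i * h * t - g * s) * (i * h * t)) + s * g * (s * i * h * t - g * s)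
      = s * s * i * h * (t * i) * h * t - s * (g * g) * s := by
    noncomm_ring
  rw [lhs, rhs, hit, hti]
  noncomm_ring

section Estimate

variable {n : Type*} [Fintype n] [DecidableEq n]

lemma frob_le_of_eq_mul_add_mul {T Δ a b c : Matrix n n ℂ} (hT : T = a * (Δ * c) + b * Δ) :
    frob T ≤ (‖a‖ * ‖c‖ + ‖b‖) * frob Δ :=
  calc frob T ≤ frob (a * (Δ * c)) + frob (b * Δ) := hT ▸ frob_add_le _ _
    _ ≤ ‖a‖ * (frob Δ * ‖c‖) + ‖b‖ * frob Δ :=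
        add_le_add ((frob_mul_le_left _ _).trans
          (mul_le_mul_of_nonneg_left (frob_mul_le_right _ _) (norm_nonneg _)))
          (frob_mul_le_left _ _)
    _ = (‖a‖ * ‖c‖ + ‖b‖) * frob Δ := by ring

lemma half_mul_inv_sqrt_mul_inv_sqrt_mul_frob_le {g s : ℝ} {T Δ a b c : Matrix n n ℂ}
    (hg : 1 ≤ g) (hs : 1 ≤ s) (ha : ‖a‖ ≤ 1) (hb : ‖b‖ ≤ 1) (hc : ‖c‖ ≤ √s)
    (hT : T = a * (Δ * c) + b * Δ) : 1 / 2 * (√g)⁻¹ * (√s)⁻¹ * frob T ≤ frob Δ := by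
  have hg' : 1 ≤ √g := Real.one_le_sqrt.mpr hg
  have hs' : 1 ≤ √s := Real.one_le_sqrt.mpr hs
  have hac : ‖a‖ * ‖c‖ ≤ √s := by nlinarith [norm_nonneg a, norm_nonneg c]
  have hcoef : ‖a‖ * ‖c‖ + ‖b‖ ≤ 2 * √g * √s := by nlinarith
  have hT' : frob T ≤ 2 * √g * √s * frob Δ :=
    (frob_le_of_eq_mul_add_mul hT).trans (mul_le_mul_of_nonneg_right hcoef (frob_nonneg Δ))
  calc 1 / 2 * (√g)⁻¹ * (√s)⁻¹ * frob T
      ≤ 1 / 2 * (√g)⁻¹ * (√s)⁻¹ * (2 * √g * √s * frob Δ) := by gcongr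
    _ = frob Δ := by field_simp

end Estimate

theorem stmt11_general {d : ℕ}
    (N : Subalgebra ℂ (Matrix (Fin d) (Fin d) ℂ))
    (E : Matrix (Fin d) (Fin d) ℂ →ₗ[ℂ] Matrix (Fin d) (Fin d) ℂ)
    (hEpos : ∀ A : Matrix (Fin d) (Fin d) ℂ, A.PosSemidef → (E A).PosSemidef)
    (hEfix : ∀ B ∈ N, E B = B)
    (hEtr : ∀ A : Matrix (Fin d) (Fin d) ℂ, (E A).trace = A.trace)
    (σ ρ : Matrix (Fin d) (Fin d) ℂ)
    (hσ : σ.PosDef) (hσtr : σ.trace = 1)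
    (hρ : ρ.PosDef) (hρtr : ρ.trace = 1) :
    frob (msqrt σ * misqrt (E σ) * msqrt (misqrt (E σ) * E ρ * misqrt (E σ)) * msqrt (E σ) -
        msqrt (misqrt σ * ρ * misqrt σ) * msqrt σ) ≥
      (1 / 2) * (Real.sqrt (opNorm (misqrt σ * ρ * misqrt σ)))⁻¹ *
        (Real.sqrt (opNorm (minv σ)))⁻¹ * frob (σ * minv (E σ) * E ρ - ρ) := by
  have := nonempty_of_trace_ne_zero (hσtr ▸ one_ne_zero)
  have hE1 : E 1 = 1 := hEfix 1 N.one_mem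
  have hσ' := hσ.isStrictlyPositive
  have hσN := isStrictlyPositive_map hEpos hE1 hσ'
  have hρ' : 0 ≤ ρ := hρ.posSemidef.nonneg
  have hρN : 0 ≤ E ρ := (hEpos ρ hρ.posSemidef).nonneg
  have hσre : (trace σ).re = 1 := by simp [hσtr]
  have hρre : (trace ρ).re = 1 := by simp [hρtr]
  have hρNre : (trace (E ρ)).re = 1 := by simp [hEtr, hρtr]
  have hdecomp := sub_eq_mul_mul_add_mul_of_mul_eq_one (misqrt_mul_msqrt hσN)
    (msqrt_mul_misqrt hσN) (msqrt_mul_msqrt hσ'.nonneg) (misqrt_mul_misqrt hσN.nonneg)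
    (by rw [msqrt_mul_msqrt (conj_misqrt_nonneg hρN), msqrt_mul_conj_misqrt_mul_msqrt hσN])
    (by rw [msqrt_mul_msqrt (conj_misqrt_nonneg hρ'), msqrt_mul_conj_misqrt_mul_msqrt hσ'])
  rw [opNorm_eq_norm, opNorm_eq_norm, ge_iff_le]
  refine half_mul_inv_sqrt_mul_inv_sqrt_mul_frob_le ?_ ?_ ?_ ?_ ?_ hdecomp
  · simpa [hσre, hρre] using re_trace_le_norm_conj_misqrt_mul hσ' hρ'
  · simpa [hσre] using one_le_norm_minv_mul_re_trace hσ'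
  · simpa [hσre] using norm_msqrt_le hσ'.nonneg
  · simpa [hρre] using norm_msqrt_mul_msqrt_conj_le hσ' hρ'
  · exact (norm_misqrt_mul_msqrt_conj_mul_msqrt_le hσN hρN).trans <|
      Real.sqrt_le_sqrt (by simpa [hρNre] using norm_minv_map_le hEpos hE1 hσ')

theorem stmt11 {d : ℕ}
    (N : Subalgebra ℂ (Matrix (Fin d) (Fin d) ℂ))
    (hNstar : ∀ A ∈ N, Aᴴ ∈ N)
    (E : Matrix (Fin d) (Fin d) ℂ →ₗ[ℂ] Matrix (Fin d) (Fin d) ℂ)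
    (hEpos : ∀ A : Matrix (Fin d) (Fin d) ℂ, A.PosSemidef → (E A).PosSemidef)
    (hEmem : ∀ A : Matrix (Fin d) (Fin d) ℂ, E A ∈ N)
    (hEfix : ∀ B ∈ N, E B = B)
    (hEmod : ∀ (A : Matrix (Fin d) (Fin d) ℂ), ∀ B ∈ N, E (A * B) = E A * B)
    (hEtr : ∀ A : Matrix (Fin d) (Fin d) ℂ, (E A).trace = A.trace)
    (σ ρ : Matrix (Fin d) (Fin d) ℂ)
    (hσ : σ.PosDef) (hσtr : σ.trace = 1)
    (hρ : ρ.PosDef) (hρtr : ρ.trace = 1) :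
    frob (msqrt σ * misqrt (E σ) * msqrt (misqrt (E σ) * E ρ * misqrt (E σ)) * msqrt (E σ) -
        msqrt (misqrt σ * ρ * misqrt σ) * msqrt σ) ≥
      (1 / 2) * (Real.sqrt (opNorm (misqrt σ * ρ * misqrt σ)))⁻¹ *
        (Real.sqrt (opNorm (minv σ)))⁻¹ * frob (σ * minv (E σ) * E ρ - ρ) :=
  stmt11_general N E hEpos hEfix hEtr σ ρ hσ hσtr hρ hρtr
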